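/- arXiv:1911.03661 — 5 statements merged into one kernel-verified Lean document; each statement's English description precedes it below -/
import Mathlib

section
/- Let L > 0 and f : [0,L] → ℝ be twice continuously differentiable. Then for every x ∈ (0,L), |f'(x)| ≤ (9/L²)·∫₀ᴸ |f(t)| dt + ∫₀ᴸ |f''(t)| dt. -/
/-!
On each outer third of `[a, b]` the continuous function `|f|` attains a value at most its
average there, so there are points `ξ ≤ a + (b - a)/3` and `η ≥ b - (b - a)/3` with
`|f ξ| + |f η| ≤ 3/(b - a) · ∫ₐᵇ |f|`. The mean value theorem on `[ξ, η]`, an interval of length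
at least `(b - a)/3`, gives a point where `|f'| ≤ 9/(b - a)² · ∫ₐᵇ |f|`, and the fundamental theorem
of calculus moves from that point to any `x` at the cost of `∫ₐᵇ |f''|`.
-/

open intervalIntegral MeasureTheory Set

theorem abs_integral_le_integral_abs_of_mem_Icc {g : ℝ → ℝ} {a b c d : ℝ}
    (hg : IntervalIntegrable g volume c d) (ha : a ∈ Icc c d) (hb : b ∈ Icc c d) :
    |∫ t in a..b, g t| ≤ ∫ t in c..d, |g t| := by
  have hcd : c ≤ d := ha.1.trans ha.2
  have hsub : uIoc a b ⊆ uIoc c d := uIoc_subset_uIoc_of_uIcc_subset_uIcc <|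
    (uIcc_subset_Icc ha hb).trans (uIcc_of_le hcd).symm.subset
  calc |∫ t in a..b, g t| ≤ |(∫ t in a..b, |g t|)| := by
        simpa only [Real.norm_eq_abs] using
          norm_integral_le_abs_integral_norm (f := g) (a := a) (b := b)
    _ ≤ |(∫ t in c..d, |g t|)| :=
        abs_integral_mono_interval hsub (.of_forall fun _ ↦ abs_nonneg _) hg.abs
    _ = ∫ t in c..d, |g t| := abs_of_nonneg (integral_nonneg hcd fun _ _ ↦ abs_nonneg _)

theorem exists_mul_le_integral {g : ℝ → ℝ} {a b : ℝ} (hab : a ≤ b)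
    (hg : ContinuousOn g (Icc a b)) : ∃ c ∈ Icc a b, (b - a) * g c ≤ ∫ t in a..b, g t := by
  obtain ⟨c, hc, hmin⟩ := isCompact_Icc.exists_isMinOn (nonempty_Icc.mpr hab) hg
  refine ⟨c, hc, ?_⟩
  calc (b - a) * g c = ∫ _ in a..b, g c := by simp
    _ ≤ ∫ t in a..b, g t :=
        integral_mono_on hab intervalIntegrable_const (hg.intervalIntegrable_of_Icc hab)
          fun t ht ↦ hmin ht

theorem integral_add_integral_le_of_nonneg {g : ℝ → ℝ} {a b c d : ℝ}
    (hab : a ≤ b) (hbc : b ≤ c) (hcd : c ≤ d) (hg : IntervalIntegrable g volume a d)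
    (hg₀ : ∀ t, 0 ≤ g t) :
    (∫ t in a..b, g t) + ∫ t in c..d, g t ≤ ∫ t in a..d, g t := by
  have hb : b ∈ uIcc a d := mem_uIcc_of_le hab (hbc.trans hcd)
  have hbd : IntervalIntegrable g volume b d := hg.mono_set (uIcc_subset_uIcc hb right_mem_uIcc)
  rw [← integral_add_adjacent_intervals (hg.mono_set (uIcc_subset_uIcc left_mem_uIcc hb)) hbd]
  gcongr
  exact integral_mono_interval hbc hcd le_rfl (.of_forall hg₀) hbd

theorem abs_sub_le_integral_abs_deriv {g : ℝ → ℝ} (hg : ContDiff ℝ 1 g) {a b c d : ℝ}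
    (ha : a ∈ Icc c d) (hb : b ∈ Icc c d) :
    |g b - g a| ≤ ∫ t in c..d, |deriv g t| := by
  have hcont : Continuous (deriv g) := hg.continuous_deriv le_rfl
  rw [← integral_deriv_eq_sub (fun t _ ↦ hg.differentiable one_ne_zero t)
    (hcont.intervalIntegrable a b)]
  exact abs_integral_le_integral_abs_of_mem_Icc (hcont.intervalIntegrable c d) ha hb

theorem exists_abs_deriv_le_integral_abs {f : ℝ → ℝ} (hf : Differentiable ℝ f) {a b : ℝ}
    (hab : a < b) : ∃ c ∈ Ioo a b, |deriv f c| ≤ 9 / (b - a) ^ 2 * ∫ t in a..b, |f t| := by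
  set h := (b - a) / 3 with hh
  have hh₀ : 0 < h := by positivity
  obtain ⟨ξ, hξ, hξI⟩ := exists_mul_le_integral (a := a) (b := a + h) (by linarith)
    hf.continuous.abs.continuousOn
  obtain ⟨η, hη, hηI⟩ := exists_mul_le_integral (a := b - h) (b := b) (by linarith)
    hf.continuous.abs.continuousOn
  have hsplit := integral_add_integral_le_of_nonneg (g := fun t ↦ |f t|)
    (b := a + h) (c := b - h) (by linarith) (by linarith) (by linarith)
    (hf.continuous.abs.intervalIntegrable a b) fun t ↦ abs_nonneg (f t)
  have hgap : h ≤ η - ξ := by linarith [hξ.2, hη.1]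
  obtain ⟨c, hc, hslope⟩ := exists_deriv_eq_slope f (hh₀.trans_le hgap |> sub_pos.mp)
    hf.continuous.continuousOn hf.differentiableOn
  refine ⟨c, ⟨hξ.1.trans_lt hc.1, hc.2.trans_le hη.2⟩, ?_⟩
  have hsum : |f η| + |f ξ| ≤ (∫ t in a..b, |f t|) / h := by
    rw [le_div_iff₀ hh₀]
    simp only [add_sub_cancel_left, sub_sub_cancel] at hξI hηI
    linarith
  calc |deriv f c| = |f η - f ξ| / (η - ξ) := by
        rw [hslope, abs_div, abs_of_pos (by linarith : 0 < η - ξ)]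
    _ ≤ (|f η| + |f ξ|) / h := by gcongr; exact abs_sub _ _
    _ ≤ (∫ t in a..b, |f t|) / h / h := by gcongr
    _ = 9 / (b - a) ^ 2 * ∫ t in a..b, |f t| := by rw [hh]; field_simp; ring

theorem stmt_0 (L : ℝ) (hL : 0 < L) (f : ℝ → ℝ) (hf : ContDiff ℝ 2 f) :
    ∀ x ∈ Set.Ioo (0:ℝ) L,
      |deriv f x| ≤ (9 / L ^ 2) * (∫ t in (0:ℝ)..L, |f t|) +
        ∫ t in (0:ℝ)..L, |deriv (deriv f) t| := by
  intro x hx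
  obtain ⟨c, hc, hfc⟩ := exists_abs_deriv_le_integral_abs (hf.differentiable two_ne_zero) hL
  rw [sub_zero] at hfc
  have hvar := abs_sub_le_integral_abs_deriv (hf.deriv' (n := 1)) (Ioo_subset_Icc_self hc)
    (Ioo_subset_Icc_self hx)
  calc |deriv f x| ≤ |deriv f c| + |deriv f x - deriv f c| :=
        norm_le_norm_add_norm_sub' (deriv f x) (deriv f c)
    _ ≤ _ := add_le_add hfc hvar
end

section
/- Let L > 0 and f : [0,L] → ℝ be twice continuously differentiable. Then ∫₀ᴸ |f'(x)|² dx ≤ (162/L²)·∫₀ᴸ |f(t)|² dt + 2L²·∫₀ᴸ |f''(t)|² dt. -/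
/-! Integrating by parts against the weight `y (L - y)`, which vanishes at both ends of `[0, L]`,
gives for every `x`
`L³/6 · f'(x) = ∫ (2y - L) f(y) dy + ∫ y (L - y) (f'(x) - f'(y)) dy`.
Cauchy–Schwarz bounds the first term by `‖f‖₂` and, as `(f'(x) - f'(y))² ≤ L ‖f''‖₂²`,
the second by `‖f''‖₂`. Squaring with `(a + b)² ≤ 3a² + 3b²/2` and integrating in `x` gives the
inequality with the sharper constants `36` and `9/5`. -/

open MeasureTheory Set

theorem sq_integral_mul_le {α : Type*} [MeasurableSpace α] {μ : Measure α} {u v : α → ℝ}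
    (hu : Integrable (fun a => u a ^ 2) μ) (hv : Integrable (fun a => v a ^ 2) μ)
    (huv : Integrable (fun a => u a * v a) μ) :
    (∫ a, u a * v a ∂μ) ^ 2 ≤ (∫ a, u a ^ 2 ∂μ) * ∫ a, v a ^ 2 ∂μ := by
  have hquad : ∀ t : ℝ, 0 ≤ (∫ a, v a ^ 2 ∂μ) * (t * t) + (-2 * ∫ a, u a * v a ∂μ) * t
      + ∫ a, u a ^ 2 ∂μ := by
    intro t
    have hexp : ∫ a, (u a - t * v a) ^ 2 ∂μ
        = ∫ a, u a ^ 2 ∂μ - 2 * t * ∫ a, u a * v a ∂μ + t ^ 2 * ∫ a, v a ^ 2 ∂μ := by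
      have e : ∀ a, (u a - t * v a) ^ 2 = u a ^ 2 - 2 * t * (u a * v a) + t ^ 2 * v a ^ 2 :=
        fun a => by ring
      simp only [e]
      rw [integral_add, integral_sub, integral_const_mul, integral_const_mul]
      exacts [hu, huv.const_mul _, hu.sub (huv.const_mul _), hv.const_mul _]
    have hnonneg : 0 ≤ ∫ a, (u a - t * v a) ^ 2 ∂μ := integral_nonneg fun a => sq_nonneg _
    nlinarith
  have := discrim_le_zero hquad
  rw [discrim] at this
  nlinarith

theorem sq_intervalIntegral_mul_le {u v : ℝ → ℝ} (hu : Continuous u) (hv : Continuous v)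
    {a b : ℝ} (hab : a ≤ b) :
    (∫ s in a..b, u s * v s) ^ 2 ≤ (∫ s in a..b, u s ^ 2) * ∫ s in a..b, v s ^ 2 := by
  simp only [intervalIntegral.integral_of_le hab]
  exact sq_integral_mul_le ((hu.pow 2).intervalIntegrable a b).1
    ((hv.pow 2).intervalIntegrable a b).1 ((hu.mul hv).intervalIntegrable a b).1

theorem sq_intervalIntegral_le_of_mem_Icc {v : ℝ → ℝ} (hv : Continuous v) {a b c d : ℝ}
    (ha : a ∈ Icc c d) (hb : b ∈ Icc c d) :
    (∫ s in a..b, v s) ^ 2 ≤ (d - c) * ∫ s in c..d, v s ^ 2 := by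
  wlog hab : a ≤ b generalizing a b
  · rw [intervalIntegral.integral_symm, neg_sq]
    exact this hb ha (le_of_not_ge hab)
  have hcs := sq_intervalIntegral_mul_le continuous_const hv hab (u := fun _ => 1)
  simp only [one_mul, one_pow, intervalIntegral.integral_const, smul_eq_mul, mul_one] at hcs
  refine hcs.trans (mul_le_mul (by linarith [ha.1, hb.2]) ?_
    (intervalIntegral.integral_nonneg hab fun s _ => sq_nonneg _) (by linarith [ha.1, ha.2]))
  exact intervalIntegral.integral_mono_interval ha.1 hab hb.2
    (ae_of_all _ fun s => sq_nonneg _) ((hv.pow 2).intervalIntegrable c d)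

theorem integral_id_mul_sub (L : ℝ) : ∫ y in (0:ℝ)..L, y * (L - y) = L ^ 3 / 6 := by
  have e : ∀ y : ℝ, y * (L - y) = L * y - y ^ 2 := fun y => by ring
  simp only [e]
  rw [intervalIntegral.integral_sub, intervalIntegral.integral_const_mul]
  all_goals first | (simp; ring) | exact (by fun_prop : Continuous _).intervalIntegrable _ _

theorem integral_id_mul_sub_sq (L : ℝ) : ∫ y in (0:ℝ)..L, (y * (L - y)) ^ 2 = L ^ 5 / 30 := by
  have e : ∀ y : ℝ, (y * (L - y)) ^ 2 = L ^ 2 * y ^ 2 - 2 * L * y ^ 3 + y ^ 4 := fun y => by ring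
  simp only [e]
  rw [intervalIntegral.integral_add, intervalIntegral.integral_sub,
    intervalIntegral.integral_const_mul, intervalIntegral.integral_const_mul]
  all_goals first | (simp; ring) | exact (by fun_prop : Continuous _).intervalIntegrable _ _

theorem integral_two_mul_sub_sq (L : ℝ) : ∫ y in (0:ℝ)..L, (2 * y - L) ^ 2 = L ^ 3 / 3 := by
  rw [intervalIntegral.integral_comp_mul_sub (fun t => t ^ 2) two_ne_zero]
  simp
  ring

theorem integral_id_mul_sub_mul_deriv {f : ℝ → ℝ} (hf : ContDiff ℝ 1 f) (L : ℝ) :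
    ∫ y in (0:ℝ)..L, y * (L - y) * deriv f y = ∫ y in (0:ℝ)..L, (2 * y - L) * f y := by
  have hw : ∀ y, HasDerivAt (fun y => y * (L - y)) (L - 2 * y) y := fun y =>
    ((hasDerivAt_id' y).mul ((hasDerivAt_id' y).const_sub L)).congr_deriv (by ring)
  rw [intervalIntegral.integral_mul_deriv_eq_deriv_mul (fun y _ => hw y)
    (fun y _ => (hf.differentiable one_ne_zero y).hasDerivAt)
    ((by fun_prop : Continuous fun y : ℝ => L - 2 * y).intervalIntegrable _ _)
    ((hf.continuous_deriv le_rfl).intervalIntegrable _ _)]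
  have e : ∀ y, (2 * y - L) * f y = -((L - 2 * y) * f y) := fun y => by ring
  simp only [e, intervalIntegral.integral_neg, sub_self, mul_zero, zero_mul, zero_sub]

theorem mul_deriv_eq_integral_add_integral {f : ℝ → ℝ} (hf : ContDiff ℝ 1 f) (L x : ℝ) :
    L ^ 3 / 6 * deriv f x = (∫ y in (0:ℝ)..L, (2 * y - L) * f y)
      + ∫ y in (0:ℝ)..L, y * (L - y) * (deriv f x - deriv f y) := by
  have e : ∀ y, y * (L - y) * (deriv f x - deriv f y)
      = y * (L - y) * deriv f x - y * (L - y) * deriv f y := fun y => by ring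
  simp only [e]
  rw [intervalIntegral.integral_sub, intervalIntegral.integral_mul_const, integral_id_mul_sub,
    integral_id_mul_sub_mul_deriv hf]
  · ring
  · exact (by fun_prop : Continuous _).intervalIntegrable _ _
  · exact ((by fun_prop : Continuous fun y : ℝ => y * (L - y)).mul
      (hf.continuous_deriv le_rfl)).intervalIntegrable _ _

theorem sq_deriv_le_of_mem_Icc {f : ℝ → ℝ} (hf : ContDiff ℝ 2 f) {L x : ℝ} (hL : 0 < L)
    (hx : x ∈ Icc 0 L) :
    deriv f x ^ 2 ≤ 36 / L ^ 3 * (∫ t in (0:ℝ)..L, f t ^ 2)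
      + 9 / 5 * L * ∫ t in (0:ℝ)..L, deriv (deriv f) t ^ 2 := by
  have hf1 : ContDiff ℝ 1 f := hf.of_le one_le_two
  have hf' : ContDiff ℝ 1 (deriv f) := hf.deriv' (n := 1)
  have hfc := hf.continuous
  have hf'c := hf1.continuous_deriv le_rfl
  have hf''c := hf'.continuous_deriv le_rfl
  set P := ∫ t in (0:ℝ)..L, f t ^ 2
  set Q := ∫ t in (0:ℝ)..L, deriv (deriv f) t ^ 2
  set a := ∫ y in (0:ℝ)..L, (2 * y - L) * f y
  set b := ∫ y in (0:ℝ)..L, y * (L - y) * (deriv f x - deriv f y)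
  have ha : a ^ 2 ≤ L ^ 3 / 3 * P := by
    simpa only [integral_two_mul_sub_sq] using
      sq_intervalIntegral_mul_le (by fun_prop) hfc hL.le (u := fun y => 2 * y - L)
  have hd : ∀ y ∈ Icc 0 L, (deriv f x - deriv f y) ^ 2 ≤ L * Q := by
    intro y hy
    rw [← intervalIntegral.integral_deriv_eq_sub (fun s _ => hf'.differentiable one_ne_zero s)
      (hf''c.intervalIntegrable _ _)]
    simpa using sq_intervalIntegral_le_of_mem_Icc hf''c hy hx
  have hb : b ^ 2 ≤ L ^ 5 / 30 * (L * (L * Q)) := by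
    refine (sq_intervalIntegral_mul_le (by fun_prop) (continuous_const.sub hf'c) hL.le
      (u := fun y => y * (L - y)) (v := fun y => deriv f x - deriv f y)).trans ?_
    rw [integral_id_mul_sub_sq]
    gcongr
    calc (∫ y in (0:ℝ)..L, (deriv f x - deriv f y) ^ 2) ≤ ∫ y in (0:ℝ)..L, L * Q :=
          intervalIntegral.integral_mono_on hL.le
            (((continuous_const.sub hf'c).pow 2).intervalIntegrable _ _) intervalIntegrable_const hd
      _ = L * (L * Q) := by simp
  have hrep : (L ^ 3 / 6 * deriv f x) ^ 2 ≤ L ^ 3 * P + L ^ 7 * Q / 20 := by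
    rw [mul_deriv_eq_integral_add_integral hf1]
    nlinarith [sq_nonneg (2 * a - b)]
  calc deriv f x ^ 2 = 36 / L ^ 6 * (L ^ 3 / 6 * deriv f x) ^ 2 := by field_simp; ring
    _ ≤ 36 / L ^ 6 * (L ^ 3 * P + L ^ 7 * Q / 20) := by gcongr
    _ = _ := by field_simp; ring

theorem integral_sq_deriv_le {f : ℝ → ℝ} (hf : ContDiff ℝ 2 f) {L : ℝ} (hL : 0 < L) :
    ∫ x in (0:ℝ)..L, deriv f x ^ 2 ≤ 36 / L ^ 2 * (∫ t in (0:ℝ)..L, f t ^ 2)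
      + 9 / 5 * L ^ 2 * ∫ t in (0:ℝ)..L, deriv (deriv f) t ^ 2 := by
  have hf'c : Continuous (deriv f) := hf.continuous_deriv one_le_two
  calc ∫ x in (0:ℝ)..L, deriv f x ^ 2
      ≤ ∫ x in (0:ℝ)..L, (36 / L ^ 3 * (∫ t in (0:ℝ)..L, f t ^ 2)
          + 9 / 5 * L * ∫ t in (0:ℝ)..L, deriv (deriv f) t ^ 2) :=
        intervalIntegral.integral_mono_on hL.le ((hf'c.pow 2).intervalIntegrable _ _)
          intervalIntegrable_const fun x hx => sq_deriv_le_of_mem_Icc hf hL hx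
    _ = _ := by
        simp only [intervalIntegral.integral_const, sub_zero, smul_eq_mul]
        field_simp

theorem stmt_1 (L : ℝ) (hL : 0 < L) (f : ℝ → ℝ) (hf : ContDiff ℝ 2 f) :
    (∫ x in (0:ℝ)..L, (deriv f x) ^ 2) ≤
      (162 / L ^ 2) * (∫ t in (0:ℝ)..L, (f t) ^ 2) +
        2 * L ^ 2 * ∫ t in (0:ℝ)..L, (deriv (deriv f) t) ^ 2 := by
  have hP : 0 ≤ ∫ t in (0:ℝ)..L, f t ^ 2 :=
    intervalIntegral.integral_nonneg hL.le fun t _ => sq_nonneg _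
  have hQ : 0 ≤ ∫ t in (0:ℝ)..L, deriv (deriv f) t ^ 2 :=
    intervalIntegral.integral_nonneg hL.le fun t _ => sq_nonneg _
  refine (integral_sq_deriv_le hf hL).trans (add_le_add ?_ ?_) <;> gcongr <;> norm_num
end

section
/- Let u : [0,T]×[0,L] → ℝ be a smooth solution of u_t + u_x + u_{xxx} = 0 with u(t,0) = u(t,L) = u_x(t,L) = 0. Then ∫₀ᵀ∫₀ᴸ u_x(t,x)² dx dt ≤ ((T+L)/3)·∫₀ᴸ u(0,x)² dx. -/
open MeasureTheory Function Set intervalIntegral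

noncomputable def px (u : ℝ → ℝ → ℝ) : ℝ → ℝ → ℝ := fun t x => deriv (u t) x
noncomputable def pt' (u : ℝ → ℝ → ℝ) : ℝ → ℝ → ℝ := fun t x => deriv (fun s => u s x) t

lemma hasDerivX {u : ℝ → ℝ → ℝ} (hu : ContDiff ℝ (⊤ : ℕ∞) (uncurry u)) (t x : ℝ) :
    HasDerivAt (u t) (fderiv ℝ (uncurry u) (t, x) (0, 1)) x :=
  (hu.differentiable (by simp) (t, x)).hasFDerivAt.comp_hasDerivAt x
    ((hasDerivAt_const x t).prodMk (hasDerivAt_id x))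

lemma hasDerivT {u : ℝ → ℝ → ℝ} (hu : ContDiff ℝ (⊤ : ℕ∞) (uncurry u)) (t x : ℝ) :
    HasDerivAt (fun s => u s x) (fderiv ℝ (uncurry u) (t, x) (1, 0)) t :=
  by have h := (hu.differentiable (by simp) (t, x)).hasFDerivAt.comp_hasDerivAt t
        ((hasDerivAt_id t).prodMk (hasDerivAt_const t x)); exact h

lemma contDiff_px {u : ℝ → ℝ → ℝ} (hu : ContDiff ℝ (⊤ : ℕ∞) (uncurry u)) :
    ContDiff ℝ (⊤ : ℕ∞) (uncurry (px u)) := by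
  have h : uncurry (px u) = fun p : ℝ × ℝ => fderiv ℝ (uncurry u) p (0, 1) := by
    funext p
    simp only [uncurry, px]
    exact (hasDerivX hu p.1 p.2).deriv
  rw [h]
  exact (hu.fderiv_right (by simp)).clm_apply contDiff_const

lemma contDiff_pt {u : ℝ → ℝ → ℝ} (hu : ContDiff ℝ (⊤ : ℕ∞) (uncurry u)) :
    ContDiff ℝ (⊤ : ℕ∞) (uncurry (pt' u)) := by
  have h : uncurry (pt' u) = fun p : ℝ × ℝ => fderiv ℝ (uncurry u) p (1, 0) := by
    funext p
    simp only [uncurry, pt']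
    exact (hasDerivT hu p.1 p.2).deriv
  rw [h]
  exact (hu.fderiv_right (by simp)).clm_apply contDiff_const

lemma sliceX {u : ℝ → ℝ → ℝ} (hu : ContDiff ℝ (⊤ : ℕ∞) (uncurry u)) (t : ℝ) :
    ContDiff ℝ (⊤ : ℕ∞) (u t) :=
  hu.comp (contDiff_const.prodMk contDiff_id)

lemma sliceT {u : ℝ → ℝ → ℝ} (hu : ContDiff ℝ (⊤ : ℕ∞) (uncurry u)) (x : ℝ) :
    ContDiff ℝ (⊤ : ℕ∞) (fun s => u s x) :=
  hu.comp (contDiff_id.prodMk contDiff_const)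

lemma swap_cont {a b : ℝ} (ha : 0 ≤ a) (hb : 0 ≤ b) {F : ℝ → ℝ → ℝ}
    (hF : Continuous (uncurry F)) :
    ∫ s in (0:ℝ)..a, ∫ x in (0:ℝ)..b, F s x = ∫ x in (0:ℝ)..b, ∫ s in (0:ℝ)..a, F s x := by
  rw [intervalIntegral.integral_of_le ha, intervalIntegral.integral_of_le hb]
  simp_rw [intervalIntegral.integral_of_le hb, intervalIntegral.integral_of_le ha]
  have h1 : IntegrableOn (uncurry F) ((Ioc 0 a) ×ˢ (Ioc 0 b)) (volume.prod volume) := by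
    apply (hF.continuousOn.integrableOn_compact
      ((isCompact_Icc (a := (0:ℝ)) (b := a)).prod (isCompact_Icc (a := (0:ℝ)) (b := b)))).mono_set
      (Set.prod_mono Ioc_subset_Icc_self Ioc_subset_Icc_self)
  rw [IntegrableOn, ← Measure.prod_restrict] at h1
  exact MeasureTheory.integral_integral_swap h1

theorem stmt_8 (T L : ℝ) (hT : 0 < T) (hL : 0 < L) (u : ℝ → ℝ → ℝ)
    (hreg : ContDiff ℝ (⊤ : ℕ∞) (Function.uncurry u))
    (hpde : ∀ t ∈ Set.Icc (0:ℝ) T, ∀ x ∈ Set.Icc (0:ℝ) L,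
      deriv (fun s => u s x) t + deriv (u t) x + iteratedDeriv 3 (u t) x = 0)
    (hbc : ∀ t ∈ Set.Icc (0:ℝ) T, u t 0 = 0 ∧ u t L = 0 ∧ deriv (u t) L = 0) :
    (∫ t in (0:ℝ)..T, ∫ x in (0:ℝ)..L, (deriv (u t) x) ^ 2) ≤
      ((T + L) / 3) * ∫ x in (0:ℝ)..L, (u 0 x) ^ 2 := by
  have h1reg := contDiff_px hreg
  have h2reg := contDiff_px h1reg
  have h3reg := contDiff_px h2reg
  have htreg := contDiff_pt hreg
  have iiL : ∀ {f : ℝ → ℝ}, Continuous f → IntervalIntegrable f volume 0 L :=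
    fun hf => hf.intervalIntegrable 0 L
  have iiT : ∀ {f : ℝ → ℝ}, Continuous f → IntervalIntegrable f volume 0 T :=
    fun hf => hf.intervalIntegrable 0 T
  have cu : Continuous (uncurry u) := hreg.continuous
  have c1 : Continuous (uncurry (px u)) := h1reg.continuous
  have c2 : Continuous (uncurry (px (px u))) := h2reg.continuous
  have c3 : Continuous (uncurry (px (px (px u)))) := h3reg.continuous
  have ct : Continuous (uncurry (pt' u)) := htreg.continuous
  -- slice continuity in x
  have su : ∀ t, Continuous (u t) := fun t => (sliceX hreg t).continuous
  have s1 : ∀ t, Continuous (px u t) := fun t => (sliceX h1reg t).continuous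
  have s2 : ∀ t, Continuous (px (px u) t) := fun t => (sliceX h2reg t).continuous
  have s3 : ∀ t, Continuous (px (px (px u)) t) := fun t => (sliceX h3reg t).continuous
  have st : ∀ t, Continuous (pt' u t) := fun t => (sliceX htreg t).continuous
  -- PDE reformulated
  have pde : ∀ t ∈ Set.Icc (0:ℝ) T, ∀ x ∈ Set.Icc (0:ℝ) L,
      pt' u t x = -(px u t x + px (px (px u)) t x) := by
    intro t ht x hx
    have h := hpde t ht x hx
    have h3 : iteratedDeriv 3 (u t) x = px (px (px u)) t x := by
      simp only [iteratedDeriv_succ, iteratedDeriv_zero]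
      rfl
    rw [h3] at h
    have h0 : deriv (fun s => u s x) t = pt' u t x := rfl
    have h1 : deriv (u t) x = px u t x := rfl
    rw [h0, h1] at h
    linarith
  -- pointwise derivatives
  have hd0 : ∀ t x, HasDerivAt (u t) (px u t x) x :=
    fun t x => ((sliceX hreg t).differentiable (by simp) x).hasDerivAt
  have hd1 : ∀ t x, HasDerivAt (px u t) (px (px u) t x) x :=
    fun t x => ((sliceX h1reg t).differentiable (by simp) x).hasDerivAt
  have hd2 : ∀ t x, HasDerivAt (px (px u) t) (px (px (px u)) t x) x :=
    fun t x => ((sliceX h2reg t).differentiable (by simp) x).hasDerivAt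
  have hdt : ∀ x t, HasDerivAt (fun s => u s x) (pt' u t x) t :=
    fun x t => ((sliceT hreg x).differentiable (by simp) t).hasDerivAt
  -- identity A : multiplier x·u
  have idA : ∀ t ∈ Set.Icc (0:ℝ) T,
      (∫ x in (0:ℝ)..L, 2*x*u t x*pt' u t x)
        = (∫ x in (0:ℝ)..L, (u t x)^2) - 3*∫ x in (0:ℝ)..L, (px u t x)^2 := by
    intro t ht
    have key : ∀ x ∈ uIcc (0:ℝ) L,
        HasDerivAt (fun y => -(y*(u t y)^2) - 2*(y*u t y*px (px u) t y)
            + 2*(u t y*px u t y) + y*(px u t y)^2)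
          (-(u t x)^2 - 2*x*u t x*(px u t x + px (px (px u)) t x) + 3*(px u t x)^2) x := by
      intro x _
      have p1 := (hasDerivAt_id x).mul ((hd0 t x).fun_pow 2)
      have p2 := (((hasDerivAt_id x).mul (hd0 t x)).mul (hd2 t x)).const_mul (2:ℝ)
      have p3 := ((hd0 t x).mul (hd1 t x)).const_mul (2:ℝ)
      have p4 := (hasDerivAt_id x).mul ((hd1 t x).fun_pow 2)
      have := ((p1.neg.sub p2).add p3).add p4
      refine this.congr_deriv ?_
      simp only [id_eq, Pi.mul_apply]
      ring
    have cG : Continuous (fun x => -(u t x)^2 - 2*x*u t x*(px u t x + px (px (px u)) t x)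
        + 3*(px u t x)^2) := by
      have := su t; have := s1 t; have := s3 t; fun_prop
    have ftc := intervalIntegral.integral_eq_sub_of_hasDerivAt key (cG.intervalIntegrable 0 L)
    obtain ⟨b1, b2, b3⟩ := hbc t ht
    have hb3 : px u t L = 0 := b3
    have gL : -(L*(u t L)^2) - 2*(L*u t L*px (px u) t L)
        + 2*(u t L*px u t L) + L*(px u t L)^2 = 0 := by rw [b2, hb3]; ring
    have g0 : -((0:ℝ)*(u t 0)^2) - 2*((0:ℝ)*u t 0*px (px u) t 0)
        + 2*(u t 0*px u t 0) + (0:ℝ)*(px u t 0)^2 = 0 := by rw [b1]; ring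
    have e1 : (∫ x in (0:ℝ)..L, 2*x*u t x*pt' u t x)
        = ∫ x in (0:ℝ)..L, ((-(u t x)^2 - 2*x*u t x*(px u t x + px (px (px u)) t x)
            + 3*(px u t x)^2) + ((u t x)^2 - 3*(px u t x)^2)) := by
      apply intervalIntegral.integral_congr
      intro x hx
      rw [uIcc_of_le hL.le] at hx
      dsimp only
      rw [pde t ht x hx]
      ring
    rw [e1, intervalIntegral.integral_add (cG.intervalIntegrable 0 L)
      (iiL (by have := su t; have := s1 t; fun_prop)),
      intervalIntegral.integral_sub (iiL (by have := su t; fun_prop))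
        (iiL (by have := s1 t; fun_prop)),
      intervalIntegral.integral_const_mul, ftc, gL, g0]
    ring
  -- identity B : multiplier u
  have idB : ∀ t ∈ Set.Icc (0:ℝ) T,
      (∫ x in (0:ℝ)..L, 2*u t x*pt' u t x) = -(px u t 0)^2 := by
    intro t ht
    have key : ∀ x ∈ uIcc (0:ℝ) L,
        HasDerivAt (fun y => -(u t y)^2 - 2*(u t y*px (px u) t y) + (px u t y)^2)
          (-(2*u t x*(px u t x + px (px (px u)) t x))) x := by
      intro x _
      have p1 := (hd0 t x).fun_pow 2
      have p2 := ((hd0 t x).mul (hd2 t x)).const_mul (2:ℝ)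
      have p3 := (hd1 t x).fun_pow 2
      have := (p1.neg.sub p2).add p3
      refine this.congr_deriv ?_
      ring
    have cG : Continuous (fun x => -(2*u t x*(px u t x + px (px (px u)) t x))) := by
      have := su t; have := s1 t; have := s3 t; fun_prop
    have ftc := intervalIntegral.integral_eq_sub_of_hasDerivAt key (cG.intervalIntegrable 0 L)
    obtain ⟨b1, b2, b3⟩ := hbc t ht
    have hb3 : px u t L = 0 := b3
    have e1 : (∫ x in (0:ℝ)..L, 2*u t x*pt' u t x)
        = ∫ x in (0:ℝ)..L, -(2*u t x*(px u t x + px (px (px u)) t x)) := by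
      apply intervalIntegral.integral_congr
      intro x hx
      rw [uIcc_of_le hL.le] at hx
      dsimp only
      rw [pde t ht x hx]
      ring
    rw [e1, ftc, b1, b2, hb3]
    ring
  -- identity C : FTC in time
  have idC : ∀ x t : ℝ, (u t x)^2 - (u 0 x)^2 = ∫ s in (0:ℝ)..t, 2*u s x*pt' u s x := by
    intro x t
    have key : ∀ s ∈ uIcc (0:ℝ) t,
        HasDerivAt (fun r => (u r x)^2) (2*u s x*pt' u s x) s := by
      intro s _
      have := (hdt x s).fun_pow 2
      refine this.congr_deriv ?_
      ring
    have cI : Continuous (fun s => 2*u s x*pt' u s x) := by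
      have := (sliceT hreg x).continuous; have := (sliceT htreg x).continuous; fun_prop
    exact (intervalIntegral.integral_eq_sub_of_hasDerivAt key (cI.intervalIntegrable 0 t)).symm
  -- energy decay
  have energy : ∀ t ∈ Set.Icc (0:ℝ) T,
      (∫ x in (0:ℝ)..L, (u t x)^2) ≤ ∫ x in (0:ℝ)..L, (u 0 x)^2 := by
    intro t ht
    have e1 : (∫ x in (0:ℝ)..L, (u t x)^2) - (∫ x in (0:ℝ)..L, (u 0 x)^2)
        = ∫ x in (0:ℝ)..L, ((u t x)^2 - (u 0 x)^2) := by
      rw [intervalIntegral.integral_sub (iiL (by have := su t; fun_prop))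
        (iiL (by have := su 0; fun_prop))]
    have e2 : (∫ x in (0:ℝ)..L, ((u t x)^2 - (u 0 x)^2))
        = ∫ x in (0:ℝ)..L, ∫ s in (0:ℝ)..t, 2*u s x*pt' u s x := by
      apply intervalIntegral.integral_congr
      intro x _
      exact idC x t
    have e3 : (∫ x in (0:ℝ)..L, ∫ s in (0:ℝ)..t, 2*u s x*pt' u s x)
        = ∫ s in (0:ℝ)..t, ∫ x in (0:ℝ)..L, 2*u s x*pt' u s x := by
      refine (swap_cont ht.1 hL.le ?_).symm
      exact (continuous_const.mul cu).mul ct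
    have e4 : (∫ s in (0:ℝ)..t, ∫ x in (0:ℝ)..L, 2*u s x*pt' u s x)
        = ∫ s in (0:ℝ)..t, -(px u s 0)^2 := by
      apply intervalIntegral.integral_congr
      intro s hs
      rw [uIcc_of_le ht.1] at hs
      exact idB s ⟨hs.1, hs.2.trans ht.2⟩
    have e5 : (∫ s in (0:ℝ)..t, -(px u s 0)^2) ≤ 0 := by
      have : (0:ℝ) ≤ ∫ s in (0:ℝ)..t, (px u s 0)^2 :=
        intervalIntegral.integral_nonneg ht.1 (fun s _ => sq_nonneg _)
      have heq : (∫ s in (0:ℝ)..t, -(px u s 0)^2) = -∫ s in (0:ℝ)..t, (px u s 0)^2 := by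
        rw [← intervalIntegral.integral_neg]
      linarith [heq ▸ neg_nonpos_of_nonneg this]
    linarith [e1.trans (e2.trans (e3.trans e4))]
  -- parametric integrals continuous
  have contE : Continuous (fun s => ∫ x in (0:ℝ)..L, (u s x)^2) := by
    exact intervalIntegral.continuous_parametric_intervalIntegral_of_continuous'
      (f := fun s x => (u s x)^2) (by fun_prop) 0 L
  have contD : Continuous (fun s => ∫ x in (0:ℝ)..L, (px u s x)^2) := by
    exact intervalIntegral.continuous_parametric_intervalIntegral_of_continuous'
      (f := fun s x => (px u s x)^2) (by fun_prop) 0 L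
  -- main identity
  have main : (∫ x in (0:ℝ)..L, x*(u T x)^2) - (∫ x in (0:ℝ)..L, x*(u 0 x)^2)
      = (∫ s in (0:ℝ)..T, ∫ x in (0:ℝ)..L, (u s x)^2)
        - 3*∫ s in (0:ℝ)..T, ∫ x in (0:ℝ)..L, (px u s x)^2 := by
    have m1 : (∫ x in (0:ℝ)..L, x*(u T x)^2) - (∫ x in (0:ℝ)..L, x*(u 0 x)^2)
        = ∫ x in (0:ℝ)..L, (x*(u T x)^2 - x*(u 0 x)^2) := by
      rw [intervalIntegral.integral_sub (iiL (by have := su T; fun_prop))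
        (iiL (by have := su 0; fun_prop))]
    have m2 : (∫ x in (0:ℝ)..L, (x*(u T x)^2 - x*(u 0 x)^2))
        = ∫ x in (0:ℝ)..L, ∫ s in (0:ℝ)..T, 2*x*u s x*pt' u s x := by
      apply intervalIntegral.integral_congr
      intro x _
      dsimp only
      have hx2 : x*(u T x)^2 - x*(u 0 x)^2 = x * ((u T x)^2 - (u 0 x)^2) := by ring
      rw [hx2, idC x T, ← intervalIntegral.integral_const_mul]
      apply intervalIntegral.integral_congr
      intro s _
      dsimp only
      ring
    have m3 : (∫ x in (0:ℝ)..L, ∫ s in (0:ℝ)..T, 2*x*u s x*pt' u s x)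
        = ∫ s in (0:ℝ)..T, ∫ x in (0:ℝ)..L, 2*x*u s x*pt' u s x := by
      refine (swap_cont hT.le hL.le ?_).symm
      exact ((continuous_const.mul continuous_snd).mul cu).mul ct
    have m4 : (∫ s in (0:ℝ)..T, ∫ x in (0:ℝ)..L, 2*x*u s x*pt' u s x)
        = ∫ s in (0:ℝ)..T, ((∫ x in (0:ℝ)..L, (u s x)^2) - 3*∫ x in (0:ℝ)..L, (px u s x)^2) := by
      apply intervalIntegral.integral_congr
      intro s hs
      rw [uIcc_of_le hT.le] at hs
      exact idA s hs
    have m5 : (∫ s in (0:ℝ)..T, ((∫ x in (0:ℝ)..L, (u s x)^2) - 3*∫ x in (0:ℝ)..L, (px u s x)^2))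
        = (∫ s in (0:ℝ)..T, ∫ x in (0:ℝ)..L, (u s x)^2)
          - 3*∫ s in (0:ℝ)..T, ∫ x in (0:ℝ)..L, (px u s x)^2 := by
      rw [intervalIntegral.integral_sub (g := fun s => 3*∫ x in (0:ℝ)..L, (px u s x)^2)
        (contE.intervalIntegrable 0 T)
        ((continuous_const.mul contD).intervalIntegrable 0 T),
        intervalIntegral.integral_const_mul]
    exact m1.trans (m2.trans (m3.trans (m4.trans m5)))
  -- bounds
  have bB : (∫ s in (0:ℝ)..T, ∫ x in (0:ℝ)..L, (u s x)^2)
      ≤ T * ∫ x in (0:ℝ)..L, (u 0 x)^2 := by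
    have := intervalIntegral.integral_mono_on hT.le (contE.intervalIntegrable 0 T)
      (_root_.intervalIntegrable_const (μ := volume) (c := ∫ x in (0:ℝ)..L, (u 0 x)^2)) energy
    simpa using this
  have bP : (0:ℝ) ≤ ∫ x in (0:ℝ)..L, x*(u T x)^2 :=
    intervalIntegral.integral_nonneg hL.le (fun x hx => mul_nonneg hx.1 (sq_nonneg _))
  have bQ : (∫ x in (0:ℝ)..L, x*(u 0 x)^2) ≤ L * ∫ x in (0:ℝ)..L, (u 0 x)^2 := by
    rw [← intervalIntegral.integral_const_mul]
    apply intervalIntegral.integral_mono_on hL.le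
      (iiL (by have := su 0; fun_prop)) (iiL (by have := su 0; fun_prop))
    intro x hx
    exact mul_le_mul_of_nonneg_right hx.2 (sq_nonneg _)
  have goal' : (∫ t in (0:ℝ)..T, ∫ x in (0:ℝ)..L, (px u t x)^2)
      ≤ ((T + L) / 3) * ∫ x in (0:ℝ)..L, (u 0 x)^2 := by
    linarith
  exact goal'
end

section
/- Let u : [0,T]×[0,L] → ℝ be a smooth solution of u_t + u_x + u_{xxx} = 0 with u(t,0) = u(t,L) = u_x(t,L) = 0, and suppose T and L satisfy L³/(3Tπ²) + L²/(3π²) < 1. Then ∫₀ᵀ u_x(t,0)² dt ≥ (1 − L³/(3Tπ²) − L²/(3π²))·∫₀ᴸ u(0,x)² dx. -/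
open Real

open MeasureTheory intervalIntegral Metric


noncomputable def pd1 (f : ℝ × ℝ → ℝ) (p : ℝ × ℝ) : ℝ := fderiv ℝ f p (1, 0)
noncomputable def pd2 (f : ℝ × ℝ → ℝ) (p : ℝ × ℝ) : ℝ := fderiv ℝ f p (0, 1)

lemma hasDerivAt_pd2 {f : ℝ × ℝ → ℝ} (hf : ContDiff ℝ (⊤ : ℕ∞) f) (t x : ℝ) :
    HasDerivAt (fun y => f (t, y)) (pd2 f (t, x)) x := by
  have h1 : HasDerivAt (fun y : ℝ => ((t, y) : ℝ × ℝ)) ((0 : ℝ), (1 : ℝ)) x :=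
    (hasDerivAt_const x t).prodMk (hasDerivAt_id x)
  have h2 : HasFDerivAt f (fderiv ℝ f (t, x)) (t, x) :=
    (hf.differentiable (by simp) (t, x)).hasFDerivAt
  exact h2.comp_hasDerivAt x h1

lemma hasDerivAt_pd1 {f : ℝ × ℝ → ℝ} (hf : ContDiff ℝ (⊤ : ℕ∞) f) (t x : ℝ) :
    HasDerivAt (fun s => f (s, x)) (pd1 f (t, x)) t := by
  have h1 : HasDerivAt (fun s : ℝ => ((s, x) : ℝ × ℝ)) ((1 : ℝ), (0 : ℝ)) t :=
    (hasDerivAt_id t).prodMk (hasDerivAt_const t x)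
  have h2 : HasFDerivAt f (fderiv ℝ f (t, x)) (t, x) :=
    (hf.differentiable (by simp) (t, x)).hasFDerivAt
  exact h2.comp_hasDerivAt t h1

lemma contDiff_pd2 {f : ℝ × ℝ → ℝ} (hf : ContDiff ℝ (⊤ : ℕ∞) f) : ContDiff ℝ (⊤ : ℕ∞) (pd2 f) := by
  have h := hf.fderiv_right (m := (⊤ : ℕ∞)) le_rfl
  exact (ContinuousLinearMap.apply ℝ ℝ ((0 : ℝ), (1 : ℝ))).contDiff.comp h

lemma contDiff_pd1 {f : ℝ × ℝ → ℝ} (hf : ContDiff ℝ (⊤ : ℕ∞) f) : ContDiff ℝ (⊤ : ℕ∞) (pd1 f) := by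
  have h := hf.fderiv_right (m := (⊤ : ℕ∞)) le_rfl
  exact (ContinuousLinearMap.apply ℝ ℝ ((1 : ℝ), (0 : ℝ))).contDiff.comp h

lemma deriv_eq_pd2 {f : ℝ × ℝ → ℝ} (hf : ContDiff ℝ (⊤ : ℕ∞) f) (t : ℝ) :
    (deriv fun y => f (t, y)) = fun x => pd2 f (t, x) :=
  funext fun x => (hasDerivAt_pd2 hf t x).deriv


/-- Differentiation under the interval integral sign, for jointly continuous data. -/
lemma param_hasDerivAt {L : ℝ} {g g' : ℝ × ℝ → ℝ} (hg : Continuous g) (hg' : Continuous g')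
    (h : ∀ t x, HasDerivAt (fun s => g (s, x)) (g' (t, x)) t) (t₀ : ℝ) :
    HasDerivAt (fun t => ∫ x in (0:ℝ)..L, g (t, x)) (∫ x in (0:ℝ)..L, g' (t₀, x)) t₀ := by
  obtain ⟨C, hC⟩ : ∃ C, ∀ p ∈ (Set.Icc (t₀ - 1) (t₀ + 1) ×ˢ Set.uIcc (0:ℝ) L), ‖g' p‖ ≤ C :=
    ((isCompact_Icc.prod isCompact_uIcc).exists_bound_of_continuousOn hg'.continuousOn)
  have hbound : ∀ᵐ x ∂(volume : Measure ℝ), x ∈ Set.uIoc (0:ℝ) L →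
      ∀ t ∈ ball t₀ 1, ‖g' (t, x)‖ ≤ C := by
    refine Filter.Eventually.of_forall fun x hx t ht => ?_
    have h1 : |t - t₀| < 1 := by simpa [Real.dist_eq] using mem_ball.1 ht
    have h2 := abs_lt.1 h1
    exact hC (t, x) ⟨⟨by linarith [h2.1], by linarith [h2.2]⟩, Set.uIoc_subset_uIcc hx⟩
  have hdiff : ∀ᵐ x ∂(volume : Measure ℝ), x ∈ Set.uIoc (0:ℝ) L →
      ∀ t ∈ ball t₀ 1, HasDerivAt (fun s => g (s, x)) (g' (t, x)) t :=
    Filter.Eventually.of_forall fun x _ t _ => h t x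
  have key := intervalIntegral.hasDerivAt_integral_of_dominated_loc_of_deriv_le
    (F := fun t x => g (t, x)) (F' := fun t x => g' (t, x)) (x₀ := t₀)
    (a := (0:ℝ)) (b := L) (μ := volume) (bound := fun _ => C) (s := ball t₀ 1)
    (ball_mem_nhds t₀ one_pos)
    (Filter.Eventually.of_forall fun t =>
      (hg.comp (continuous_const.prodMk continuous_id)).aestronglyMeasurable)
    ((hg.comp (continuous_const.prodMk continuous_id)).intervalIntegrable 0 L)
    ((hg'.comp (continuous_const.prodMk continuous_id)).aestronglyMeasurable)
    hbound intervalIntegrable_const hdiff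
  exact key.2


lemma poincare_step {L : ℝ} (hL : 0 < L) {v v' : ℝ → ℝ}
    (hv : ∀ x, HasDerivAt v (v' x) x) (hvc : Continuous v) (hv'c : Continuous v')
    {δ : ℝ} (hδ0 : 0 < δ) (hδ : δ < L / 2) :
    (π / L) ^ 2 * ∫ x in δ..(L - δ), (v x) ^ 2 ≤
      (∫ x in (0:ℝ)..L, (v' x) ^ 2) +
        (π / L) * (Real.cos (π / L * δ) / Real.sin (π / L * δ)) *
          ((v δ) ^ 2 + (v (L - δ)) ^ 2) := by
  set k : ℝ := π / L with hk_def
  have hπ := Real.pi_pos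
  have hk : 0 < k := div_pos hπ hL
  have hkL : k * L = π := by rw [hk_def]; field_simp
  have hδle : δ ≤ L - δ := by linarith
  have huIcc : Set.uIcc δ (L - δ) = Set.Icc δ (L - δ) := Set.uIcc_of_le hδle
  have hsin : ∀ x ∈ Set.uIcc δ (L - δ), 0 < Real.sin (k * x) := by
    intro x hx
    rw [huIcc] at hx
    apply Real.sin_pos_of_pos_of_lt_pi
    · exact mul_pos hk (lt_of_lt_of_le hδ0 hx.1)
    · have h1 : k * x ≤ k * (L - δ) := by nlinarith [hx.2]
      have h2 : k * (L - δ) = π - k * δ := by rw [mul_sub, hkL]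
      nlinarith [mul_pos hk hδ0]
  set c : ℝ → ℝ := fun x => Real.cos (k * x) / Real.sin (k * x) with hc_def
  set D : ℝ → ℝ := fun x =>
    -k * (v x) ^ 2 / (Real.sin (k * x)) ^ 2 + c x * (2 * v x * v' x) with hD_def
  -- derivative of H = c * v^2
  have hH : ∀ x ∈ Set.uIcc δ (L - δ),
      HasDerivAt (fun y => c y * (v y) ^ 2) (D x) x := by
    intro x hx
    have hs := hsin x hx
    have hsne : Real.sin (k * x) ≠ 0 := ne_of_gt hs
    have hcos : HasDerivAt (fun y => Real.cos (k * y)) (-Real.sin (k * x) * k) x :=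
      (Real.hasDerivAt_cos (k * x)).comp x ((hasDerivAt_id x).const_mul k) |>.congr_deriv (by ring)
    have hsin' : HasDerivAt (fun y => Real.sin (k * y)) (Real.cos (k * x) * k) x :=
      (Real.hasDerivAt_sin (k * x)).comp x ((hasDerivAt_id x).const_mul k) |>.congr_deriv (by ring)
    have hcD : HasDerivAt c
        ((-Real.sin (k * x) * k * Real.sin (k * x) -
          Real.cos (k * x) * (Real.cos (k * x) * k)) / (Real.sin (k * x)) ^ 2) x :=
      hcos.div hsin' hsne
    have hc' : (-Real.sin (k * x) * k * Real.sin (k * x) -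
          Real.cos (k * x) * (Real.cos (k * x) * k)) / (Real.sin (k * x)) ^ 2
        = -k / (Real.sin (k * x)) ^ 2 := by
      congr 1
      linear_combination (-k) * Real.sin_sq_add_cos_sq (k * x)
    rw [hc'] at hcD
    have hv2 : HasDerivAt (fun y => (v y) ^ 2) (2 * v x * v' x) x := by
      have := (hv x).fun_pow 2
      simpa [mul_comm, mul_assoc, mul_left_comm] using this
    have := hcD.fun_mul hv2
    refine this.congr_deriv ?_
    simp only [hD_def]
    ring
  -- continuity facts
  have hsc : Continuous fun x => Real.sin (k * x) :=
    Real.continuous_sin.comp (continuous_const.mul continuous_id)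
  have hcc : Continuous fun x => Real.cos (k * x) :=
    Real.continuous_cos.comp (continuous_const.mul continuous_id)
  have hsne : ∀ x ∈ Set.uIcc δ (L - δ), Real.sin (k * x) ≠ 0 := fun x hx => ne_of_gt (hsin x hx)
  have hcCont : ContinuousOn c (Set.uIcc δ (L - δ)) :=
    hcc.continuousOn.div hsc.continuousOn hsne
  have hDcont : ContinuousOn D (Set.uIcc δ (L - δ)) := by
    apply ContinuousOn.add
    · exact (continuous_const.mul (hvc.pow 2)).continuousOn.div
        ((hsc.pow 2).continuousOn) (fun x hx => pow_ne_zero 2 (hsne x hx))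
    · exact hcCont.mul (((continuous_const.mul hvc).mul hv'c)).continuousOn
  have hFTC : ∫ x in δ..(L - δ), D x
      = c (L - δ) * (v (L - δ)) ^ 2 - c δ * (v δ) ^ 2 :=
    integral_eq_sub_of_hasDerivAt hH (hDcont.intervalIntegrable)
  have hnn : 0 ≤ ∫ x in δ..(L - δ), (v' x - k * c x * v x) ^ 2 :=
    integral_nonneg hδle (fun x _ => sq_nonneg _)
  -- pointwise identity
  have hpt : Set.EqOn (fun x => (v' x - k * c x * v x) ^ 2)
      (fun x => (v' x) ^ 2 - k * D x - k ^ 2 * (v x) ^ 2) (Set.uIcc δ (L - δ)) := by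
    intro x hx
    have hs := hsin x hx
    have hsne0 : Real.sin (k * x) ≠ 0 := ne_of_gt hs
    simp only [hD_def, hc_def]
    have e : (Real.cos (k * x) / Real.sin (k * x)) ^ 2 = 1 / Real.sin (k * x) ^ 2 - 1 := by
      rw [div_pow, eq_sub_iff_add_eq, div_add_one (pow_ne_zero 2 hsne0)]
      congr 1
      linarith [Real.sin_sq_add_cos_sq (k * x)]
    linear_combination (k ^ 2 * v x ^ 2) * e
  have hint1 : IntervalIntegrable (fun x => (v' x) ^ 2) volume δ (L - δ) :=
    (hv'c.pow 2).intervalIntegrable _ _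
  have hint2 : IntervalIntegrable D volume δ (L - δ) := hDcont.intervalIntegrable
  have hint3 : IntervalIntegrable (fun x => (v x) ^ 2) volume δ (L - δ) :=
    (hvc.pow 2).intervalIntegrable _ _
  have hsplit : ∫ x in δ..(L - δ), ((v' x) ^ 2 - k * D x - k ^ 2 * (v x) ^ 2)
      = (∫ x in δ..(L - δ), (v' x) ^ 2) - k * (∫ x in δ..(L - δ), D x)
        - k ^ 2 * ∫ x in δ..(L - δ), (v x) ^ 2 := by
    rw [integral_sub (hint1.sub (hint2.const_mul k)) (hint3.const_mul (k ^ 2)),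
      integral_sub hint1 (hint2.const_mul k), intervalIntegral.integral_const_mul, intervalIntegral.integral_const_mul]
  rw [integral_congr hpt, hsplit, hFTC] at hnn
  -- c (L - δ) = - c δ
  have hcflip : c (L - δ) = -c δ := by
    have h2 : k * (L - δ) = π - k * δ := by rw [mul_sub, hkL]
    simp only [hc_def, h2, Real.cos_pi_sub, Real.sin_pi_sub, neg_div]
  -- monotonicity of the v'^2 integral
  have hmono : (∫ x in δ..(L - δ), (v' x) ^ 2) ≤ ∫ x in (0:ℝ)..L, (v' x) ^ 2 := by
    apply integral_mono_interval (le_of_lt hδ0) hδle (by linarith)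
    · exact Filter.Eventually.of_forall fun x => sq_nonneg _
    · exact (hv'c.pow 2).intervalIntegrable _ _
  rw [hcflip] at hnn
  have hcδ : c δ = Real.cos (π / L * δ) / Real.sin (π / L * δ) := rfl
  rw [← hcδ]
  nlinarith [hnn, hmono]

lemma poincare {L : ℝ} (hL : 0 < L) {v v' : ℝ → ℝ}
    (hv : ∀ x, HasDerivAt v (v' x) x) (hvc : Continuous v) (hv'c : Continuous v')
    (h0 : v 0 = 0) (hLv : v L = 0) :
    (π / L) ^ 2 * ∫ x in (0:ℝ)..L, (v x) ^ 2 ≤ ∫ x in (0:ℝ)..L, (v' x) ^ 2 := by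
  set k : ℝ := π / L with hk_def
  have hπ := Real.pi_pos
  have hk : 0 < k := div_pos hπ hL
  set A : ℝ := ∫ x in (0:ℝ)..L, (v' x) ^ 2 with hA_def
  obtain ⟨C, hC⟩ := isCompact_Icc.exists_bound_of_continuousOn
    (hv'c.continuousOn (s := Set.Icc (0:ℝ) L))
  set M : ℝ := max C 0 with hM_def
  have hM0 : 0 ≤ M := le_max_right _ _
  have hMb : ∀ x ∈ Set.Icc (0:ℝ) L, ‖v' x‖ ≤ M := fun x hx => (hC x hx).trans (le_max_left _ _)
  -- bounds on v near the endpoints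
  have hvδ : ∀ δ ∈ Set.Ioo (0:ℝ) (L / 2), |v δ| ≤ M * δ := by
    intro δ hδ
    have h1 : ∫ x in (0:ℝ)..δ, v' x = v δ - v 0 :=
      integral_eq_sub_of_hasDerivAt (fun x _ => hv x) (hv'c.intervalIntegrable _ _)
    have h2 : ‖∫ x in (0:ℝ)..δ, v' x‖ ≤ M * |δ - 0| := by
      apply intervalIntegral.norm_integral_le_of_norm_le_const
      intro x hx
      rw [Set.uIoc_of_le (le_of_lt hδ.1)] at hx
      exact hMb x ⟨le_of_lt hx.1, by linarith [hx.2, hδ.2]⟩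
    rw [h1, h0, sub_zero] at h2
    simpa [abs_of_pos hδ.1] using h2
  have hvLδ : ∀ δ ∈ Set.Ioo (0:ℝ) (L / 2), |v (L - δ)| ≤ M * δ := by
    intro δ hδ
    have h1 : ∫ x in (L - δ)..L, v' x = v L - v (L - δ) :=
      integral_eq_sub_of_hasDerivAt (fun x _ => hv x) (hv'c.intervalIntegrable _ _)
    have h2 : ‖∫ x in (L - δ)..L, v' x‖ ≤ M * |L - (L - δ)| := by
      apply intervalIntegral.norm_integral_le_of_norm_le_const
      intro x hx
      rw [Set.uIoc_of_le (by linarith [hδ.1] : L - δ ≤ L)] at hx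
      exact hMb x ⟨by linarith [hx.1, hδ.2], hx.2⟩
    rw [h1, hLv, zero_sub, norm_neg] at h2
    have : |L - (L - δ)| = δ := by rw [abs_of_pos (by linarith [hδ.1])]; ring
    rw [this] at h2
    exact h2
  -- the main family of inequalities
  have hmain : ∀ δ ∈ Set.Ioo (0:ℝ) (L / 2),
      k ^ 2 * (∫ x in δ..(L - δ), (v x) ^ 2) ≤ A + π * M ^ 2 * δ := by
    intro δ hδ
    have hstep := poincare_step hL hv hvc hv'c hδ.1 hδ.2
    have hkδ1 : 0 < k * δ := mul_pos hk hδ.1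
    have hkδ2 : k * δ < π / 2 := by
      have : k * δ < k * (L / 2) := by nlinarith [hδ.2]
      have h2 : k * (L / 2) = π / 2 := by rw [hk_def]; field_simp
      linarith
    have hsin_lb : 2 / π * (k * δ) ≤ Real.sin (k * δ) :=
      Real.mul_le_sin (le_of_lt hkδ1) (le_of_lt hkδ2)
    have hsin_pos : 0 < Real.sin (k * δ) :=
      lt_of_lt_of_le (by positivity) hsin_lb
    have hcos_le : Real.cos (k * δ) ≤ 1 := Real.cos_le_one _
    have hcos_nonneg : 0 ≤ Real.cos (k * δ) :=
      Real.cos_nonneg_of_mem_Icc ⟨by linarith, le_of_lt hkδ2⟩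
    have hv1 := hvδ δ hδ
    have hv2 := hvLδ δ hδ
    have hsq1 : (v δ) ^ 2 ≤ M ^ 2 * δ ^ 2 := by nlinarith [abs_nonneg (v δ), sq_abs (v δ)]
    have hsq2 : (v (L - δ)) ^ 2 ≤ M ^ 2 * δ ^ 2 := by
      nlinarith [abs_nonneg (v (L - δ)), sq_abs (v (L - δ))]
    have hfrac : Real.cos (k * δ) / Real.sin (k * δ) ≤ π / (2 * (k * δ)) := by
      rw [div_le_div_iff₀ hsin_pos (by positivity)]
      have h4 := mul_le_mul_of_nonneg_left hsin_lb (le_of_lt hπ)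
      have h5 : π * (2 / π * (k * δ)) = 2 * (k * δ) := by field_simp
      have h6 := mul_le_mul_of_nonneg_right hcos_le
        (le_of_lt (by positivity : (0:ℝ) < 2 * (k * δ)))
      linarith
    have hterm : k * (Real.cos (k * δ) / Real.sin (k * δ)) * ((v δ) ^ 2 + (v (L - δ)) ^ 2)
        ≤ π * M ^ 2 * δ := by
      have hfr_nonneg : 0 ≤ Real.cos (k * δ) / Real.sin (k * δ) := by positivity
      have h1 : k * (Real.cos (k * δ) / Real.sin (k * δ)) * ((v δ) ^ 2 + (v (L - δ)) ^ 2)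
          ≤ k * (π / (2 * (k * δ))) * (2 * (M ^ 2 * δ ^ 2)) := by
        apply mul_le_mul
        · exact mul_le_mul_of_nonneg_left hfrac (le_of_lt hk)
        · linarith
        · positivity
        · positivity
      have h2 : k * (π / (2 * (k * δ))) * (2 * (M ^ 2 * δ ^ 2)) = π * M ^ 2 * δ := by
        field_simp
      linarith
    calc k ^ 2 * (∫ x in δ..(L - δ), (v x) ^ 2)
        ≤ A + k * (Real.cos (k * δ) / Real.sin (k * δ)) * ((v δ) ^ 2 + (v (L - δ)) ^ 2) := hstep
      _ ≤ A + π * M ^ 2 * δ := by linarith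
  -- pass to the limit δ → 0⁺
  have hintall : ∀ a b : ℝ, IntervalIntegrable (fun x => (v x) ^ 2) volume a b :=
    fun a b => (hvc.pow 2).intervalIntegrable a b
  have hΨcont : Continuous fun y => ∫ x in (0:ℝ)..y, (v x) ^ 2 :=
    intervalIntegral.continuous_primitive hintall 0
  set Ψ : ℝ → ℝ := fun y => ∫ x in (0:ℝ)..y, (v x) ^ 2 with hΨ_def
  have hsplit : ∀ δ : ℝ, (∫ x in δ..(L - δ), (v x) ^ 2) = Ψ (L - δ) - Ψ δ := by
    intro δ
    have := integral_add_adjacent_intervals (μ := volume) (a := (0:ℝ)) (b := δ) (c := L - δ)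
      (hintall _ _) (hintall _ _)
    simp only [hΨ_def]
    linarith [this]
  have hlhs : Filter.Tendsto (fun δ => k ^ 2 * (∫ x in δ..(L - δ), (v x) ^ 2))
      (nhdsWithin 0 (Set.Ioi 0)) (nhds (k ^ 2 * ∫ x in (0:ℝ)..L, (v x) ^ 2)) := by
    have hc : Continuous fun δ => k ^ 2 * (Ψ (L - δ) - Ψ δ) :=
      continuous_const.mul ((hΨcont.comp (continuous_const.sub continuous_id)).sub hΨcont)
    have : Filter.Tendsto (fun δ => k ^ 2 * (Ψ (L - δ) - Ψ δ))
        (nhdsWithin 0 (Set.Ioi 0)) (nhds (k ^ 2 * (Ψ (L - 0) - Ψ 0))) :=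
      (hc.tendsto 0).mono_left nhdsWithin_le_nhds
    simp only [sub_zero] at this
    have hΨ0 : Ψ 0 = 0 := integral_same
    rw [hΨ0, sub_zero] at this
    convert this using 1
    funext δ; rw [hsplit δ]
  have hrhs : Filter.Tendsto (fun δ : ℝ => A + π * M ^ 2 * δ)
      (nhdsWithin 0 (Set.Ioi 0)) (nhds A) := by
    have hc : Continuous fun δ : ℝ => A + π * M ^ 2 * δ :=
      continuous_const.add (continuous_const.mul continuous_id)
    have : Filter.Tendsto (fun δ : ℝ => A + π * M ^ 2 * δ)
        (nhdsWithin 0 (Set.Ioi 0)) (nhds (A + π * M ^ 2 * 0)) :=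
      (hc.tendsto 0).mono_left nhdsWithin_le_nhds
    simpa using this
  have hev : ∀ᶠ δ in nhdsWithin (0:ℝ) (Set.Ioi 0),
      k ^ 2 * (∫ x in δ..(L - δ), (v x) ^ 2) ≤ A + π * M ^ 2 * δ := by
    filter_upwards [Ioo_mem_nhdsGT_of_mem
      (⟨le_rfl, by positivity⟩ : (0:ℝ) ∈ Set.Ico 0 (L / 2))] with δ hδ
    exact hmain δ hδ
  exact le_of_tendsto_of_tendsto hlhs hrhs hev

theorem stmt_9 (T L : ℝ) (hT : 0 < T) (hL : 0 < L)
    (hsmall : L ^ 3 / (3 * T * π ^ 2) + L ^ 2 / (3 * π ^ 2) < 1)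
    (u : ℝ → ℝ → ℝ)
    (hreg : ContDiff ℝ (⊤ : ℕ∞) (Function.uncurry u))
    (hpde : ∀ t ∈ Set.Icc (0:ℝ) T, ∀ x ∈ Set.Icc (0:ℝ) L,
      deriv (fun s => u s x) t + deriv (u t) x + iteratedDeriv 3 (u t) x = 0)
    (hbc : ∀ t ∈ Set.Icc (0:ℝ) T, u t 0 = 0 ∧ u t L = 0 ∧ deriv (u t) L = 0) :
    (∫ t in (0:ℝ)..T, (deriv (u t) 0) ^ 2) ≥
      (1 - L ^ 3 / (3 * T * π ^ 2) - L ^ 2 / (3 * π ^ 2)) *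
        ∫ x in (0:ℝ)..L, (u 0 x) ^ 2 := by
  have hπ := Real.pi_pos
  set U : ℝ × ℝ → ℝ := Function.uncurry u with hU_def
  set a1 : ℝ × ℝ → ℝ := pd2 U with ha1_def
  set a2 : ℝ × ℝ → ℝ := pd2 a1 with ha2_def
  set a3 : ℝ × ℝ → ℝ := pd2 a2 with ha3_def
  set bb : ℝ × ℝ → ℝ := pd1 U with hbb_def
  have ha1cd : ContDiff ℝ (⊤ : ℕ∞) a1 := contDiff_pd2 hreg
  have ha2cd : ContDiff ℝ (⊤ : ℕ∞) a2 := contDiff_pd2 ha1cd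
  have ha3cd : ContDiff ℝ (⊤ : ℕ∞) a3 := contDiff_pd2 ha2cd
  have hbbcd : ContDiff ℝ (⊤ : ℕ∞) bb := contDiff_pd1 hreg
  have hUc : Continuous U := hreg.continuous
  have ha1c : Continuous a1 := ha1cd.continuous
  have ha2c : Continuous a2 := ha2cd.continuous
  have ha3c : Continuous a3 := ha3cd.continuous
  have hbbc : Continuous bb := hbbcd.continuous
  -- partial derivative facts
  have hDx : ∀ t x, HasDerivAt (u t) (a1 (t, x)) x := fun t x => hasDerivAt_pd2 hreg t x
  have hDx2 : ∀ t x, HasDerivAt (fun y => a1 (t, y)) (a2 (t, x)) x :=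
    fun t x => hasDerivAt_pd2 ha1cd t x
  have hDx3 : ∀ t x, HasDerivAt (fun y => a2 (t, y)) (a3 (t, x)) x :=
    fun t x => hasDerivAt_pd2 ha2cd t x
  have hDt : ∀ t x, HasDerivAt (fun s => u s x) (bb (t, x)) t :=
    fun t x => hasDerivAt_pd1 hreg t x
  have hderiv1 : ∀ t, deriv (u t) = fun x => a1 (t, x) :=
    fun t => funext fun x => (hDx t x).deriv
  have hderiv3 : ∀ t x, iteratedDeriv 3 (u t) x = a3 (t, x) := by
    intro t x
    have h3 : iteratedDeriv 3 (u t) = deriv (deriv (deriv (u t))) := by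
      rw [show (3:ℕ) = 2 + 1 from rfl, iteratedDeriv_succ,
        show (2:ℕ) = 1 + 1 from rfl, iteratedDeriv_succ,
        show (1:ℕ) = 0 + 1 from rfl, iteratedDeriv_succ, iteratedDeriv_zero]
    rw [h3, hderiv1 t]
    have h2 : deriv (fun y => a1 (t, y)) = fun x => a2 (t, x) :=
      funext fun x => (hDx2 t x).deriv
    rw [h2]
    exact (hDx3 t x).deriv
  -- restated PDE and BCs
  have hpde' : ∀ t ∈ Set.Icc (0:ℝ) T, ∀ x ∈ Set.Icc (0:ℝ) L,
      bb (t, x) + a1 (t, x) + a3 (t, x) = 0 := by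
    intro t ht x hx
    have := hpde t ht x hx
    rwa [(hDt t x).deriv, hderiv1 t, hderiv3 t x] at this
  have hb0 : ∀ t ∈ Set.Icc (0:ℝ) T, u t 0 = 0 := fun t ht => (hbc t ht).1
  have hbL : ∀ t ∈ Set.Icc (0:ℝ) T, u t L = 0 := fun t ht => (hbc t ht).2.1
  have hbxL : ∀ t ∈ Set.Icc (0:ℝ) T, a1 (t, L) = 0 := by
    intro t ht
    have := (hbc t ht).2.2
    rwa [hderiv1 t] at this
  -- energy functionals
  set E : ℝ → ℝ := fun t => ∫ x in (0:ℝ)..L, (u t x) ^ 2 with hE_def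
  set Fm : ℝ → ℝ := fun t => ∫ x in (0:ℝ)..L, x * (u t x) ^ 2 with hFm_def
  set G : ℝ → ℝ := fun t => ∫ x in (0:ℝ)..L, (a1 (t, x)) ^ 2 with hG_def
  -- derivatives of the functionals
  have hE' : ∀ t₀, HasDerivAt E (∫ x in (0:ℝ)..L, 2 * u t₀ x * bb (t₀, x)) t₀ := by
    intro t₀
    exact param_hasDerivAt (g := fun p => (U p) ^ 2) (g' := fun p => 2 * U p * bb p)
      (hUc.pow 2) ((continuous_const.mul hUc).mul hbbc)
      (fun t x => ((hDt t x).pow 2).congr_deriv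
        (by simp only [hU_def, Function.uncurry_apply_pair]; ring)) t₀
  have hF' : ∀ t₀, HasDerivAt Fm (∫ x in (0:ℝ)..L, x * (2 * u t₀ x * bb (t₀, x))) t₀ := by
    intro t₀
    exact param_hasDerivAt (g := fun p => p.2 * (U p) ^ 2)
      (g' := fun p => p.2 * (2 * U p * bb p))
      (continuous_snd.mul (hUc.pow 2))
      (continuous_snd.mul ((continuous_const.mul hUc).mul hbbc))
      (fun t x => (((hDt t x).pow 2).const_mul x).congr_deriv
        (by simp only [hU_def, Function.uncurry_apply_pair]; ring)) t₀
  have hG' : ∀ t₀, HasDerivAt G (∫ x in (0:ℝ)..L, 2 * a1 (t₀, x) * pd1 a1 (t₀, x)) t₀ := by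
    intro t₀
    exact param_hasDerivAt (g := fun p => (a1 p) ^ 2) (g' := fun p => 2 * a1 p * pd1 a1 p)
      (ha1c.pow 2) ((continuous_const.mul ha1c).mul (contDiff_pd1 ha1cd).continuous)
      (fun t x => ((hasDerivAt_pd1 ha1cd t x).pow 2).congr_deriv (by ring)) t₀
  have hEcont : Continuous E := by
    rw [continuous_iff_continuousAt]; exact fun t => (hE' t).continuousAt
  have hFcont : Continuous Fm := by
    rw [continuous_iff_continuousAt]; exact fun t => (hF' t).continuousAt
  have hGcont : Continuous G := by
    rw [continuous_iff_continuousAt]; exact fun t => (hG' t).continuousAt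
  -- spatial identities
  have hcx : ∀ (f : ℝ × ℝ → ℝ), Continuous f → ∀ t : ℝ, Continuous fun x => f (t, x) :=
    fun f hf t => hf.comp (continuous_const.prodMk continuous_id)
  have huc : ∀ t : ℝ, Continuous (u t) := fun t => hcx U hUc t
  have claim1 : ∀ t ∈ Set.Icc (0:ℝ) T,
      (∫ x in (0:ℝ)..L, 2 * u t x * bb (t, x)) = -(a1 (t, 0)) ^ 2 := by
    intro t ht
    have hi1 : IntervalIntegrable (fun x => 2 * u t x * a1 (t, x)) volume 0 L :=
      Continuous.intervalIntegrable ((continuous_const.mul (huc t)).mul (hcx a1 ha1c t)) _ _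
    have hi3 : IntervalIntegrable (fun x => 2 * u t x * a3 (t, x)) volume 0 L :=
      Continuous.intervalIntegrable ((continuous_const.mul (huc t)).mul (hcx a3 ha3c t)) _ _
    have hi1n : IntervalIntegrable (fun x => -(2 * u t x * a1 (t, x))) volume 0 L :=
      Continuous.intervalIntegrable
        (((continuous_const.mul (huc t)).mul (hcx a1 ha1c t)).neg) _ _
    have hd1 : ∀ x ∈ Set.uIcc (0:ℝ) L,
        HasDerivAt (fun y => (u t y) ^ 2) (2 * u t x * a1 (t, x)) x :=
      fun x _ => ((hDx t x).pow 2).congr_deriv (by ring)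
    have hftc1 : (∫ x in (0:ℝ)..L, 2 * u t x * a1 (t, x)) = (u t L) ^ 2 - (u t 0) ^ 2 :=
      integral_eq_sub_of_hasDerivAt hd1 hi1
    rw [hbL t ht, hb0 t ht] at hftc1
    have hd3 : ∀ x ∈ Set.uIcc (0:ℝ) L,
        HasDerivAt (fun y => 2 * (u t y * a2 (t, y)) - (a1 (t, y)) ^ 2)
          (2 * u t x * a3 (t, x)) x :=
      fun x _ => ((((hDx t x).mul (hDx3 t x)).const_mul 2).sub
        ((hDx2 t x).pow 2)).congr_deriv (by ring)
    have hftc2 : (∫ x in (0:ℝ)..L, 2 * u t x * a3 (t, x)) =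
        (2 * (u t L * a2 (t, L)) - (a1 (t, L)) ^ 2)
          - (2 * (u t 0 * a2 (t, 0)) - (a1 (t, 0)) ^ 2) :=
      integral_eq_sub_of_hasDerivAt hd3 hi3
    rw [hbL t ht, hb0 t ht, hbxL t ht] at hftc2
    have hcongr : (∫ x in (0:ℝ)..L, 2 * u t x * bb (t, x)) =
        ∫ x in (0:ℝ)..L, (-(2 * u t x * a1 (t, x)) - 2 * u t x * a3 (t, x)) := by
      apply integral_congr
      intro x hx
      rw [Set.uIcc_of_le hL.le] at hx
      have hp := hpde' t ht x hx
      simp only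
      linear_combination (2 : ℝ) * u t x * hp
    rw [hcongr, integral_sub hi1n hi3, intervalIntegral.integral_neg, hftc1, hftc2]
    ring
  have claim2 : ∀ t ∈ Set.Icc (0:ℝ) T,
      (∫ x in (0:ℝ)..L, x * (2 * u t x * bb (t, x))) = E t - 3 * G t := by
    intro t ht
    have hiu2 : IntervalIntegrable (fun x => (u t x) ^ 2) volume 0 L :=
      Continuous.intervalIntegrable ((huc t).pow 2) _ _
    have hj1 : IntervalIntegrable (fun x => x * (2 * u t x * a1 (t, x))) volume 0 L :=
      Continuous.intervalIntegrable
        (continuous_id.mul ((continuous_const.mul (huc t)).mul (hcx a1 ha1c t))) _ _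
    have hj1n : IntervalIntegrable (fun x => -(x * (2 * u t x * a1 (t, x)))) volume 0 L :=
      Continuous.intervalIntegrable
        ((continuous_id.mul ((continuous_const.mul (huc t)).mul (hcx a1 ha1c t))).neg) _ _
    have hj3 : IntervalIntegrable (fun x => x * (2 * u t x * a3 (t, x))) volume 0 L :=
      Continuous.intervalIntegrable
        (continuous_id.mul ((continuous_const.mul (huc t)).mul (hcx a3 ha3c t))) _ _
    have hja : IntervalIntegrable (fun x => 3 * (a1 (t, x)) ^ 2) volume 0 L :=
      Continuous.intervalIntegrable (continuous_const.mul ((hcx a1 ha1c t).pow 2)) _ _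
    have hd3 : ∀ x ∈ Set.uIcc (0:ℝ) L,
        HasDerivAt (fun y => y * (u t y) ^ 2)
          ((u t x) ^ 2 + x * (2 * u t x * a1 (t, x))) x :=
      fun x _ => ((hasDerivAt_id x).mul ((hDx t x).fun_pow 2)).congr_deriv (by simp only [id_eq]; ring)
    have hftc3 : (∫ x in (0:ℝ)..L, ((u t x) ^ 2 + x * (2 * u t x * a1 (t, x)))) =
        L * (u t L) ^ 2 - 0 * (u t 0) ^ 2 :=
      integral_eq_sub_of_hasDerivAt hd3 (hiu2.add hj1)
    rw [hbL t ht] at hftc3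
    have hsplit3 := integral_add hiu2 hj1
    have h3a : (∫ x in (0:ℝ)..L, x * (2 * u t x * a1 (t, x))) = -E t := by
      rw [hsplit3] at hftc3
      simp only [hE_def]
      nlinarith [hftc3]
    have hd4 : ∀ x ∈ Set.uIcc (0:ℝ) L,
        HasDerivAt (fun y => 2 * (y * u t y * a2 (t, y)) - y * (a1 (t, y)) ^ 2
            - 2 * (u t y * a1 (t, y)))
          (x * (2 * u t x * a3 (t, x)) - 3 * (a1 (t, x)) ^ 2) x := by
      intro x _
      have hA : HasDerivAt (fun y => y * u t y * a2 (t, y))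
          ((1 * u t x + x * a1 (t, x)) * a2 (t, x) + x * u t x * a3 (t, x)) x :=
        ((hasDerivAt_id x).mul (hDx t x)).mul (hDx3 t x)
      have hB : HasDerivAt (fun y => y * (a1 (t, y)) ^ 2)
          (1 * (a1 (t, x)) ^ 2 + x * (2 * a1 (t, x) ^ 1 * a2 (t, x))) x :=
        (hasDerivAt_id x).mul ((hDx2 t x).pow 2)
      have hC : HasDerivAt (fun y => u t y * a1 (t, y))
          (a1 (t, x) * a1 (t, x) + u t x * a2 (t, x)) x :=
        (hDx t x).mul (hDx2 t x)
      exact (((hA.const_mul 2).sub hB).sub (hC.const_mul 2)).congr_deriv (by ring)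
    have hftc4 : (∫ x in (0:ℝ)..L, (x * (2 * u t x * a3 (t, x)) - 3 * (a1 (t, x)) ^ 2)) =
        (2 * (L * u t L * a2 (t, L)) - L * (a1 (t, L)) ^ 2 - 2 * (u t L * a1 (t, L)))
          - (2 * (0 * u t 0 * a2 (t, 0)) - 0 * (a1 (t, 0)) ^ 2 - 2 * (u t 0 * a1 (t, 0))) :=
      integral_eq_sub_of_hasDerivAt hd4 (hj3.sub hja)
    rw [hbL t ht, hb0 t ht, hbxL t ht] at hftc4
    have hsplit4 := integral_sub hj3 hja
    have h4a : (∫ x in (0:ℝ)..L, x * (2 * u t x * a3 (t, x))) = 3 * G t := by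
      rw [hsplit4, intervalIntegral.integral_const_mul] at hftc4
      simp only [hG_def]
      nlinarith [hftc4]
    have hcongr : (∫ x in (0:ℝ)..L, x * (2 * u t x * bb (t, x))) =
        ∫ x in (0:ℝ)..L, (-(x * (2 * u t x * a1 (t, x))) - x * (2 * u t x * a3 (t, x))) := by
      apply integral_congr
      intro x hx
      rw [Set.uIcc_of_le hL.le] at hx
      have hp := hpde' t ht x hx
      simp only
      linear_combination (2 : ℝ) * x * u t x * hp
    rw [hcongr, integral_sub hj1n hj3, intervalIntegral.integral_neg, h3a, h4a]
    ring
  -- energy identity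
  have hQc : Continuous fun s : ℝ => (a1 (s, 0)) ^ 2 :=
    (ha1c.comp (continuous_id.prodMk continuous_const)).pow 2
  have hQint : ∀ a b : ℝ, IntervalIntegrable (fun s => (a1 (s, 0)) ^ 2) volume a b :=
    fun a b => hQc.intervalIntegrable a b
  set I : ℝ := ∫ t in (0:ℝ)..T, (a1 (t, 0)) ^ 2 with hI_def
  have hE'2 : ∀ s ∈ Set.Icc (0:ℝ) T, HasDerivAt E (-(a1 (s, 0)) ^ 2) s :=
    fun s hs => claim1 s hs ▸ hE' s
  have hEid : ∀ t ∈ Set.Icc (0:ℝ) T,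
      E t - E 0 = -∫ s in (0:ℝ)..t, (a1 (s, 0)) ^ 2 := by
    intro t ht
    have h1 : (∫ s in (0:ℝ)..t, -(a1 (s, 0)) ^ 2) = E t - E 0 := by
      apply integral_eq_sub_of_hasDerivAt
      · intro s hs
        rw [Set.uIcc_of_le ht.1] at hs
        exact hE'2 s ⟨hs.1, le_trans hs.2 ht.2⟩
      · exact (hQc.neg).intervalIntegrable _ _
    rw [intervalIntegral.integral_neg] at h1
    linarith [h1]
  have hTmem : T ∈ Set.Icc (0:ℝ) T := ⟨hT.le, le_rfl⟩
  have hETval : E T = E 0 - I := by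
    have := hEid T hTmem
    rw [← hI_def] at this
    linarith [this]
  have hET_le : ∀ t ∈ Set.Icc (0:ℝ) T, E T ≤ E t := by
    intro t ht
    have hadd := integral_add_adjacent_intervals (a := (0:ℝ)) (b := t) (c := T)
      (hQint 0 t) (hQint t T)
    have hnn : 0 ≤ ∫ s in t..T, (a1 (s, 0)) ^ 2 :=
      integral_nonneg ht.2 (fun s _ => sq_nonneg _)
    have h1 := hEid t ht
    have h2 := hEid T hTmem
    linarith [h1, h2, hadd, hnn]
  have hEt_le_E0 : ∀ t ∈ Set.Icc (0:ℝ) T, E t ≤ E 0 := by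
    intro t ht
    have h1 := hEid t ht
    have hnn : 0 ≤ ∫ s in (0:ℝ)..t, (a1 (s, 0)) ^ 2 :=
      integral_nonneg ht.1 (fun s _ => sq_nonneg _)
    linarith [h1, hnn]
  -- Poincare for each time
  have hpoin : ∀ t ∈ Set.Icc (0:ℝ) T, (π / L) ^ 2 * E t ≤ G t := by
    intro t ht
    have := poincare hL (v := u t) (v' := fun x => a1 (t, x)) (fun x => hDx t x)
      (huc t) (hcx a1 ha1c t) (hb0 t ht) (hbL t ht)
    simpa only [hE_def, hG_def] using this
  -- multiplier identity integrated in time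
  have hF'2 : ∀ t ∈ Set.Icc (0:ℝ) T, HasDerivAt Fm (E t - 3 * G t) t :=
    fun t ht => claim2 t ht ▸ hF' t
  have hFid : (∫ t in (0:ℝ)..T, (E t - 3 * G t)) = Fm T - Fm 0 := by
    apply integral_eq_sub_of_hasDerivAt
    · intro t ht
      rw [Set.uIcc_of_le hT.le] at ht
      exact hF'2 t ht
    · exact (hEcont.sub (continuous_const.mul hGcont)).intervalIntegrable _ _
  have hEint : IntervalIntegrable E volume 0 T := hEcont.intervalIntegrable _ _
  have hGint : IntervalIntegrable G volume 0 T := hGcont.intervalIntegrable _ _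
  have hFsplit : (∫ t in (0:ℝ)..T, (E t - 3 * G t)) =
      (∫ t in (0:ℝ)..T, E t) - 3 * ∫ t in (0:ℝ)..T, G t := by
    rw [integral_sub hEint (hGint.const_mul 3),
      intervalIntegral.integral_const_mul]
  -- bounds
  have hFT : 0 ≤ Fm T := by
    simp only [hFm_def]
    exact integral_nonneg hL.le (fun x hx => mul_nonneg hx.1 (sq_nonneg _))
  have hF0 : Fm 0 ≤ L * E 0 := by
    simp only [hFm_def, hE_def]
    rw [← intervalIntegral.integral_const_mul]
    apply integral_mono_on hL.le
      ((continuous_id.mul ((huc 0).pow 2)).intervalIntegrable _ _)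
      ((continuous_const.mul ((huc 0).pow 2)).intervalIntegrable _ _)
    intro x hx
    exact mul_le_mul_of_nonneg_right hx.2 (sq_nonneg _)
  have hIE_le : (∫ t in (0:ℝ)..T, E t) ≤ T * E 0 := by
    have h1 : (∫ t in (0:ℝ)..T, E t) ≤ ∫ _t in (0:ℝ)..T, E 0 :=
      integral_mono_on hT.le hEint intervalIntegrable_const hEt_le_E0
    have h2 : (∫ _t in (0:ℝ)..T, E 0) = T * E 0 := by
      rw [intervalIntegral.integral_const]; simp
    linarith
  have hTET : T * E T ≤ ∫ t in (0:ℝ)..T, E t := by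
    have h1 : (∫ _t in (0:ℝ)..T, E T) ≤ ∫ t in (0:ℝ)..T, E t :=
      integral_mono_on hT.le intervalIntegrable_const hEint hET_le
    have h2 : (∫ _t in (0:ℝ)..T, E T) = T * E T := by
      rw [intervalIntegral.integral_const]; simp
    linarith
  have hIEIG : (π / L) ^ 2 * (∫ t in (0:ℝ)..T, E t) ≤ ∫ t in (0:ℝ)..T, G t := by
    rw [← intervalIntegral.integral_const_mul]
    exact integral_mono_on hT.le
      ((continuous_const.mul hEcont).intervalIntegrable _ _) hGint hpoin
  -- combine
  have hIGb : 3 * (∫ t in (0:ℝ)..T, G t) ≤ (T + L) * E 0 := by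
    rw [hFsplit] at hFid
    linarith [hIE_le, hFT, hF0, hFid]
  have hchain : 3 * ((π / L) ^ 2 * (T * E T)) ≤ (T + L) * E 0 := by
    have h0 : (0:ℝ) ≤ (π / L) ^ 2 := sq_nonneg _
    have h1 : (π / L) ^ 2 * (T * E T) ≤ (π / L) ^ 2 * ∫ t in (0:ℝ)..T, E t :=
      mul_le_mul_of_nonneg_left hTET h0
    linarith [hIEIG, hIGb, h1]
  have hL2 : (0:ℝ) < L ^ 2 := by positivity
  have key3 : 3 * π ^ 2 * T * E T ≤ (T + L) * E 0 * L ^ 2 := by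
    have h2 : (3 * ((π / L) ^ 2 * (T * E T))) * L ^ 2 ≤ ((T + L) * E 0) * L ^ 2 :=
      mul_le_mul_of_nonneg_right hchain hL2.le
    have h3 : (3 * ((π / L) ^ 2 * (T * E T))) * L ^ 2 = 3 * π ^ 2 * T * E T := by
      field_simp
    linarith [h2, h3.symm.le, h3.le]
  -- final arithmetic
  have hgoal : (∫ t in (0:ℝ)..T, (deriv (u t) 0) ^ 2) = I := by
    rw [hI_def]
    apply integral_congr
    intro s _
    show (deriv (u s) 0) ^ 2 = (a1 (s, 0)) ^ 2
    rw [hderiv1 s]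
  rw [hgoal, ge_iff_le]
  have hE0eq : (∫ x in (0:ℝ)..L, (u 0 x) ^ 2) = E 0 := by simp only [hE_def]
  rw [hE0eq]
  have hP : (0:ℝ) < 3 * T * π ^ 2 := by positivity
  have hco : 1 - L ^ 3 / (3 * T * π ^ 2) - L ^ 2 / (3 * π ^ 2) =
      (3 * T * π ^ 2 - L ^ 2 * (T + L)) / (3 * T * π ^ 2) := by
    field_simp
    ring
  rw [hco, div_mul_eq_mul_div, div_le_iff₀ hP]
  rw [hETval] at key3
  nlinarith [key3]
end

section
/- Let L ≥ 1, α, β ∈ ℂ with |β|/2 ≤ |α| ≤ 2|β|, let μ ∈ ℂ be a zero of α − β e^{−iLξ} (i.e. α = β e^{−iLμ}), and let 0 < r < π/(8L). Then for every ξ on the circle |ξ − μ| = r, one has |α − β e^{−iLξ}| ≥ |α|·L·r/48. -/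
/-! Since `α = β e^{-iLμ}`, we have `α - β e^{-iLξ} = α (1 - e^w)` with `w = -iL(ξ - μ)` and
`‖w‖ = Lr < π/8 < 1/2`. The second-order Taylor bound `‖e^w - 1 - w‖ ≤ ‖w‖²` then gives
`‖e^w - 1‖ ≥ ‖w‖ - ‖w‖² ≥ ‖w‖/2`, far better than the required `‖w‖/48`. -/

open Real

namespace Complex

theorem norm_sub_sq_le_norm_exp_sub_one {w : ℂ} (hw : ‖w‖ ≤ 1) :
    ‖w‖ - ‖w‖ ^ 2 ≤ ‖exp w - 1‖ := by
  have hTaylor := norm_exp_sub_one_sub_id_le hw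
  have hrev : ‖w‖ - ‖exp w - 1‖ ≤ ‖exp w - 1 - w‖ := by
    rw [norm_sub_rev (exp w - 1)]
    exact norm_sub_norm_le _ _
  linarith

theorem half_norm_le_norm_exp_sub_one {w : ℂ} (hw : ‖w‖ ≤ 1 / 2) :
    ‖w‖ / 2 ≤ ‖exp w - 1‖ := by
  have := norm_sub_sq_le_norm_exp_sub_one (hw.trans (by norm_num))
  nlinarith [norm_nonneg w]

theorem sub_mul_exp_eq_mul_one_sub_exp {α β μ c : ℂ} (hμ : α = β * exp (c * μ)) (ξ : ℂ) :
    α - β * exp (c * ξ) = α * (1 - exp (c * (ξ - μ))) := by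
  rw [hμ, mul_sub, mul_one, mul_assoc, ← exp_add]
  ring_nf

end Complex

theorem stmt_18_general (L : ℝ) (α β μ : ℂ)
    (hμ : α = β * Complex.exp (-Complex.I * L * μ))
    (r : ℝ) (hr0 : 0 < r) (hr : r < π / (8 * L)) :
    ∀ ξ : ℂ, ‖ξ - μ‖ = r →
      ‖α‖ * L * r / 48 ≤
        ‖α - β * Complex.exp (-Complex.I * L * ξ)‖ := by
  intro ξ hξ
  have hL : 0 < L := by
    by_contra! hL
    have : π / (8 * L) ≤ 0 := div_nonpos_of_nonneg_of_nonpos pi_pos.le (by linarith)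
    linarith
  have hnorm : ‖-Complex.I * L * (ξ - μ)‖ = L * r := by
    simp [hξ, abs_of_pos hL]
  have hLr : L * r ≤ 1 / 2 := by
    have := (lt_div_iff₀ (by positivity : (0 : ℝ) < 8 * L)).mp hr
    linarith [pi_lt_d2]
  have hexp := Complex.half_norm_le_norm_exp_sub_one (hnorm ▸ hLr)
  rw [hnorm] at hexp
  rw [Complex.sub_mul_exp_eq_mul_one_sub_exp hμ, norm_mul, norm_sub_rev]
  calc ‖α‖ * L * r / 48 ≤ ‖α‖ * (L * r / 2) := by nlinarith [mul_nonneg (norm_nonneg α) (mul_pos hL hr0).le]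
    _ ≤ _ := mul_le_mul_of_nonneg_left hexp (norm_nonneg α)

theorem stmt_18 (L : ℝ) (hL : 1 ≤ L) (α β μ : ℂ)
    (hαβ₁ : ‖β‖ / 2 ≤ ‖α‖)
    (hαβ₂ : ‖α‖ ≤ 2 * ‖β‖)
    (hμ : α = β * Complex.exp (-Complex.I * L * μ))
    (r : ℝ) (hr0 : 0 < r) (hr : r < π / (8 * L)) :
    ∀ ξ : ℂ, ‖ξ - μ‖ = r →
      ‖α‖ * L * r / 48 ≤
        ‖α - β * Complex.exp (-Complex.I * L * ξ)‖ :=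
  stmt_18_general L α β μ hμ r hr0 hr
end
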